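/- Suppose the trivial extension algebra A⋉X satisfies condition (★), X is 2-torsion free, and L is a Lie derivation on A⋉X with components L(a,x) = (L_A(a)+T(x), L_X(a)+S(x)). Then L_X(a) = a·L_X(p) − L_X(p)·a + L_X(paq) for all a∈A; in particular, L_X : A → X is a derivation (the sum of the inner derivation implemented by L_X(p) and the derivation a ↦ L_X(paq)). -/

import Mathlib

open TrivSqZeroExt MulOpposite

/-! On `inl A` the Lie identity makes `D = L_X` a Lie derivation of `A` into `X`. Commuting with
`p` and using `X = pXq` gives `D(pap) = a·D(p)`, `D(qaq) = −D(p)·a` and `D(qap) = −D(qap)`, so by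
2-torsion freeness `D` is the inner derivation of `D(p)` plus `a ↦ D(paq)`. The latter is a
derivation: in `p(ab)q = (pap)(pbq) + (paq)(qbq)` the reversed products vanish, so on each summand
the Lie identity is a Leibniz rule. -/

theorem IsIdempotentElem.mul_one_sub_mul_self {A : Type*} [Ring A] {p : A}
    (hp : IsIdempotentElem p) (y : A) : y * (1 - p) * p = 0 := by
  rw [mul_assoc, hp.one_sub_mul_self, mul_zero]

theorem TrivSqZeroExt.snd_map_inl_commutator {A X : Type*} [Ring A] [AddCommGroup X]
    [Module A X] [Module Aᵐᵒᵖ X] (L : TrivSqZeroExt A X → TrivSqZeroExt A X)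
    (hLie : ∀ u v : TrivSqZeroExt A X,
        L (u * v - v * u) = (L u * v - v * L u) + (u * L v - L v * u)) (a b : A) :
    (L (inl (a * b - b * a))).snd =
      (op b • (L (inl a)).snd - b • (L (inl a)).snd) +
        (a • (L (inl b)).snd - op a • (L (inl b)).snd) := by
  have h := congrArg snd (hLie (inl a) (inl b))
  rw [inl_mul_inl, inl_mul_inl, ← inl_sub] at h
  simpa using h

section Bimodule

variable {A X : Type*} [Ring A] [AddCommGroup X] [Module A X] [Module Aᵐᵒᵖ X]
  [SMulCommClass A Aᵐᵒᵖ X]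

theorem mul_smul_sub_op_mul_smul (a b : A) (w : X) :
    (a * b) • w - op (a * b) • w = a • (b • w - op b • w) + op b • (a • w - op a • w) := by
  rw [op_mul, mul_smul, mul_smul, smul_sub, smul_sub, smul_comm a (op b) w]
  abel

theorem one_sub_smul_eq_zero_of_corner {p : A} (hp : IsIdempotentElem p)
    (hstar : ∀ x : X, op (1 - p) • (p • x) = x) (x : X) : (1 - p) • x = 0 := by
  rw [← hstar x, smul_comm, ← mul_smul, hp.one_sub_mul_self, zero_smul, smul_zero]

theorem smul_eq_self_of_corner {p : A} (hp : IsIdempotentElem p)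
    (hstar : ∀ x : X, op (1 - p) • (p • x) = x) (x : X) : p • x = x := by
  simpa [sub_smul, sub_eq_zero, eq_comm] using one_sub_smul_eq_zero_of_corner hp hstar x

theorem op_one_sub_smul_eq_self_of_corner {p : A} (hp : IsIdempotentElem p)
    (hstar : ∀ x : X, op (1 - p) • (p • x) = x) (x : X) : op (1 - p) • x = x := by
  simpa [smul_eq_self_of_corner hp hstar] using hstar x

theorem op_smul_eq_zero_of_corner {p : A} (hp : IsIdempotentElem p)
    (hstar : ∀ x : X, op (1 - p) • (p • x) = x) (x : X) : op p • x = 0 := by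
  simpa [sub_smul] using op_one_sub_smul_eq_self_of_corner hp hstar x

-- With `op b • x` the right action `x • b`, this says `D [a, b] = [D a, b] + [a, D b]`.
def IsLieDerivation (D : A →+ X) : Prop :=
  ∀ a b : A, D (a * b - b * a) = (op b • D a - b • D a) + (a • D b - op a • D b)

namespace IsLieDerivation

variable {D : A →+ X} {p : A}

theorem map_eq_sub_map_commutator_idem
    (hD : IsLieDerivation D) (hp : IsIdempotentElem p)
    (hstar : ∀ x : X, op (1 - p) • (p • x) = x) (a : A) :
    D a = a • D p - op a • D p - D (a * p - p * a) := by
  rw [hD, smul_eq_self_of_corner hp hstar, op_smul_eq_zero_of_corner hp hstar]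
  abel

theorem map_idem_mul_mul_idem
    (hD : IsLieDerivation D) (hp : IsIdempotentElem p)
    (hstar : ∀ x : X, op (1 - p) • (p • x) = x) (a : A) : D (p * a * p) = a • D p := by
  rw [hD.map_eq_sub_map_commutator_idem hp hstar]
  simp only [← mul_assoc, hp.eq, hp.mul_mul_self, sub_self, map_zero, sub_zero, op_mul, mul_smul,
    smul_eq_self_of_corner hp hstar, op_smul_eq_zero_of_corner hp hstar, smul_zero]

theorem map_one_sub_idem_mul_mul_idem
    (hD : IsLieDerivation D) (hp : IsIdempotentElem p)
    (hstar : ∀ x : X, op (1 - p) • (p • x) = x) (htorX : ∀ x : X, x + x = 0 → x = 0)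
    (a : A) : D ((1 - p) * a * p) = 0 := by
  apply htorX
  have h := hD.map_eq_sub_map_commutator_idem hp hstar ((1 - p) * a * p)
  simp only [← mul_assoc, hp.mul_mul_self, hp.mul_one_sub_self, zero_mul, sub_zero, op_mul,
    mul_smul, one_sub_smul_eq_zero_of_corner hp hstar, op_smul_eq_zero_of_corner hp hstar,
    zero_sub] at h
  rwa [← sub_eq_zero, sub_neg_eq_add] at h

theorem map_one_sub_idem_mul_mul_one_sub_idem
    (hD : IsLieDerivation D) (hp : IsIdempotentElem p)
    (hstar : ∀ x : X, op (1 - p) • (p • x) = x) (a : A) :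
    D ((1 - p) * a * (1 - p)) = -(op a • D p) := by
  rw [hD.map_eq_sub_map_commutator_idem hp hstar]
  simp only [hp.mul_one_sub_mul_self, ← mul_assoc, hp.mul_one_sub_self, zero_mul, sub_zero,
    map_zero, op_mul, mul_smul, one_sub_smul_eq_zero_of_corner hp hstar,
    op_one_sub_smul_eq_self_of_corner hp hstar, zero_sub]

theorem map_eq_inner_add_map_corner
    (hD : IsLieDerivation D) (hp : IsIdempotentElem p)
    (hstar : ∀ x : X, op (1 - p) • (p • x) = x) (htorX : ∀ x : X, x + x = 0 → x = 0) (a : A) :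
    D a = a • D p - op a • D p + D (p * a * (1 - p)) := by
  calc D a = D (p * a * p) + D (p * a * (1 - p)) + D ((1 - p) * a * p) +
        D ((1 - p) * a * (1 - p)) := by
        rw [← map_add, ← map_add, ← map_add]
        congr 1
        noncomm_ring
    _ = a • D p - op a • D p + D (p * a * (1 - p)) := by
        rw [hD.map_idem_mul_mul_idem hp hstar, hD.map_one_sub_idem_mul_mul_idem hp hstar htorX,
          hD.map_one_sub_idem_mul_mul_one_sub_idem hp hstar]
        abel

theorem map_corner_mul
    (hD : IsLieDerivation D) (hp : IsIdempotentElem p)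
    (hstar : ∀ x : X, op (1 - p) • (p • x) = x) (a b : A) : D (p * (a * b) * (1 - p)) =
      a • D (p * b * (1 - p)) + op b • D (p * a * (1 - p)) := by
  have hpp := hD (p * a * p) (p * b * (1 - p))
  have hqq := hD (p * a * (1 - p)) ((1 - p) * b * (1 - p))
  simp only [← mul_assoc, hp.mul_mul_self, hp.one_sub.mul_mul_self, hp.mul_one_sub_mul_self,
    zero_mul, sub_zero, op_mul, mul_smul,
    smul_eq_self_of_corner hp hstar, one_sub_smul_eq_zero_of_corner hp hstar,
    op_smul_eq_zero_of_corner hp hstar, op_one_sub_smul_eq_self_of_corner hp hstar, smul_zero,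
    zero_add, add_zero] at hpp hqq
  have hsplit :
      p * (a * b) * (1 - p) = p * a * p * b * (1 - p) + p * a * (1 - p) * b * (1 - p) := by
    noncomm_ring
  rw [hsplit, map_add, hpp, hqq]

theorem map_mul
    (hD : IsLieDerivation D) (hp : IsIdempotentElem p)
    (hstar : ∀ x : X, op (1 - p) • (p • x) = x) (htorX : ∀ x : X, x + x = 0 → x = 0)
    (a b : A) : D (a * b) = a • D b + op b • D a := by
  have hdecomp := hD.map_eq_inner_add_map_corner hp hstar htorX
  rw [hdecomp (a * b), hdecomp a, hdecomp b, mul_smul_sub_op_mul_smul,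
    hD.map_corner_mul hp hstar, smul_add, smul_add]
  abel

end IsLieDerivation

end Bimodule

theorem lieDerivation_component_LX_derivation_general
    {R A X : Type*} [CommRing R] [Ring A] [Algebra R A]
    [AddCommGroup X] [Module R X] [Module A X] [Module Aᵐᵒᵖ X]
    [SMulCommClass A Aᵐᵒᵖ X]
    (p : A) (hp : p * p = p)
    (hstar : ∀ x : X, op (1 - p) • (p • x) = x)
    (htorX : ∀ x : X, x + x = 0 → x = 0)
    (L : TrivSqZeroExt A X →ₗ[R] TrivSqZeroExt A X)
    (hLie : ∀ u v : TrivSqZeroExt A X,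
        L (u * v - v * u) = (L u * v - v * L u) + (u * L v - L v * u))
    (LA : A →ₗ[R] A) (T : X →ₗ[R] A) (LX : A →ₗ[R] X) (S : X →ₗ[R] X)
    (hL : ∀ (a : A) (x : X), L (inl a + inr x) = inl (LA a + T x) + inr (LX a + S x)) :
    (∀ a : A, LX a = a • LX p - op a • LX p + LX (p * a * (1 - p)))
    ∧ (∀ a b : A, LX (a * b) = a • LX b + op b • LX a) := by
  have hinl (a : A) : (L (inl a)).snd = LX a := by simpa using congrArg snd (hL a 0)
  have hD : IsLieDerivation LX.toAddMonoidHom := fun a b => by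
    simpa only [LinearMap.toAddMonoidHom_coe, hinl] using snd_map_inl_commutator L hLie a b
  exact ⟨hD.map_eq_inner_add_map_corner hp hstar htorX, hD.map_mul hp hstar htorX⟩

/-- If `A ⋉ X` satisfies (★), `X` is 2-torsion free and `L`
is a Lie derivation on `A ⋉ X` with components `(L_A, T, L_X, S)`, then
`L_X(a) = a·L_X(p) − L_X(p)·a + L_X(paq)` for all `a`; in particular `L_X`
is a derivation from `A` to `X`. -/
theorem lieDerivation_component_LX_derivation
    {R A X : Type*} [CommRing R] [Ring A] [Algebra R A]
    [AddCommGroup X] [Module R X] [Module A X] [Module Aᵐᵒᵖ X]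
    [SMulCommClass A Aᵐᵒᵖ X] [IsScalarTower R A X] [IsScalarTower R Aᵐᵒᵖ X]
    (p : A) (hp : p * p = p) (hp0 : p ≠ 0) (hp1 : p ≠ 1)
    (hstar : ∀ x : X, op (1 - p) • (p • x) = x)
    (htorX : ∀ x : X, x + x = 0 → x = 0)
    (L : TrivSqZeroExt A X →ₗ[R] TrivSqZeroExt A X)
    (hLie : ∀ u v : TrivSqZeroExt A X,
        L (u * v - v * u) = (L u * v - v * L u) + (u * L v - L v * u))
    (LA : A →ₗ[R] A) (T : X →ₗ[R] A) (LX : A →ₗ[R] X) (S : X →ₗ[R] X)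
    (hL : ∀ (a : A) (x : X), L (inl a + inr x) = inl (LA a + T x) + inr (LX a + S x)) :
    (∀ a : A, LX a = a • LX p - op a • LX p + LX (p * a * (1 - p)))
    ∧ (∀ a b : A, LX (a * b) = a • LX b + op b • LX a) :=
  lieDerivation_component_LX_derivation_general p hp hstar htorX L hLie LA T LX S hL
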